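/- Let A be an n×n real matrix, B an n×m real matrix, T > 0, with observability constant c_T > 0 as above, and let g ∈ L²((0,T), ℝⁿ). Then the functional J(y⁰) := ½ ∫₀^T |B* ỹ(t)|² dt + ∫₀^T ⟨ỹ(t), g(t)⟩ dt, where ỹ solves −y′ = A*y with ỹ(0) = y⁰, is coercive and continuous on ℝⁿ, hence admits a minimizer. Moreover, if ỹ is the solution corresponding to a minimizer, then for every solution y of −y′ = A*y one has ∫₀^T ⟨y(t), B B* ỹ(t)⟩ dt + ∫₀^T ⟨y(t), g(t)⟩ dt = 0. -/

import Mathlib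

inductive PTree : Type
  | node : List PTree → PTree

namespace PTree

instance : Inhabited PTree := ⟨node []⟩

/-- the single-leaf tree ∘ -/
def leaf : PTree := node []

/-- number of leaves ‖b‖ -/
def leaves : PTree → ℕ
  | node ts => if ts.isEmpty then 1 else (ts.attach.map fun t => leaves t.1).sum
decreasing_by simp only [PTree.node.sizeOf_spec]; have := List.sizeOf_lt_of_mem t.2; omega


/-- number of internal vertices |b| -/
def internals : PTree → ℕ
  | node ts => if ts.isEmpty then 0 else 1 + (ts.attach.map fun t => internals t.1).sum
decreasing_by simp only [PTree.node.sizeOf_spec]; have := List.sizeOf_lt_of_mem t.2; omega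


/-- total number of vertices N(b) -/
def Ntot (b : PTree) : ℕ := b.leaves + b.internals

/-- non-degenerate: every internal vertex has at least two children -/
def ND : PTree → Prop
  | node ts => ts.isEmpty ∨ (2 ≤ ts.length ∧ ∀ t ∈ ts.attach, ND t.1)
decreasing_by simp only [PTree.node.sizeOf_spec]; have := List.sizeOf_lt_of_mem t.2; omega


/-- the list of numbers of children of the internal vertices of b -/
def childCounts : PTree → List ℕ
  | node ts => if ts.isEmpty then [] else ts.length :: (ts.attach.map fun t => childCounts t.1).flatten
decreasing_by simp only [PTree.node.sizeOf_spec]; have := List.sizeOf_lt_of_mem t.2; omega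


mutual
/-- graft trees from the list E onto the successive leaves of b (left to right);
returns the grafted tree together with the unused suffix of E. -/
def graft : PTree → List PTree → PTree × List PTree
  | node ts, E =>
    if ts.isEmpty then (E.headI, E.tail)
    else
      let p := graftL ts E
      (node p.1, p.2)
/-- graft trees from the list E onto the leaves of the forest l -/
def graftL : List PTree → List PTree → List PTree × List PTree
  | [], E => ([], E)
  | t :: ts, E =>
    let p := graft t E
    let q := graftL ts p.2
    (p.1 :: q.1, q.2)
end

/-- E ∝ b : graft the tuple E onto the leaves of b -/
def graftT (b : PTree) (E : List PTree) : PTree := (b.graft E).1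

mutual
/-- the list of all decompositions b = E ∝ c, as pairs (c, E) -/
def decomps : PTree → List (PTree × List PTree)
  | node ts =>
    (leaf, [node ts]) ::
      (if ts.isEmpty then []
       else (decompsL ts).map fun p => (node p.1, p.2))
/-- decompositions of a forest: pairs (list of bases, concatenated grafted tuples) -/
def decompsL : List PTree → List (List PTree × List PTree)
  | [] => [([], [])]
  | t :: ts =>
    (decomps t).flatMap fun p => (decompsL ts).map fun q => (p.1 :: q.1, p.2 ++ q.2)
end

theorem leaves_pos : ∀ b : PTree, 0 < b.leaves
  | node ts => by
    show 0 < leaves (node ts)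
    unfold leaves
    split
    · exact one_pos
    · rename_i h
      have hne : ts ≠ [] := by simpa [List.isEmpty_iff] using h
      obtain ⟨t, ts', rfl⟩ := List.exists_cons_of_ne_nil hne
      have := leaves_pos t
      simp only [List.attach_cons, List.map_cons, List.sum_cons]
      positivity

end PTree

open TensorProduct

/-- non-degenerate planar trees -/
def NDTree := {b : PTree // b.ND}

/-- the tensor algebra ℱ over the span 𝒜 of non-degenerate planar trees -/
abbrev TA := TensorAlgebra ℝ (NDTree →₀ ℝ)

open scoped Classical in
/-- a non-degenerate planar tree seen as an element of ℱ -/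
noncomputable def iotaT (t : PTree) : TA :=
  if h : t.ND then TensorAlgebra.ι ℝ (Finsupp.single (⟨t, h⟩ : NDTree) (1 : ℝ)) else 0

/-- the coproduct ϖ : ℱ → ℱ ⊗ ℱ, ϖ(b) = Σ_{E ∝ c = b} (E₁ • ⋯ • E_k) ⊗ c -/
noncomputable def cop : TA →ₐ[ℝ] TA ⊗[ℝ] TA :=
  TensorAlgebra.lift ℝ
    ((Finsupp.lift (TA ⊗[ℝ] TA) ℝ NDTree) fun b =>
      ((PTree.decomps b.1).map fun p => ((p.2.map iotaT).prod) ⊗ₜ[ℝ] iotaT p.1).sum)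

/-- B₋ : sends ∘ to 0 and B₊(b₁,…,b_m) to b₁ • ⋯ • b_m -/
noncomputable def Bminus : PTree → TA
  | PTree.node ts => if ts.isEmpty then 0 else (ts.map iotaT).prod

/-- isomorphism of rooted trees (forgetting the planar order) -/
def RIso : PTree → PTree → Prop
  | .node ts, .node ss =>
    ∃ e : Fin ts.length ≃ Fin ss.length, ∀ i : Fin ts.length, RIso (ts.get i) (ss.get (e i))
termination_by b _ => sizeOf b
decreasing_by
  simp only [PTree.node.sizeOf_spec]
  have h : sizeOf (ts.get i) < sizeOf ts :=
    List.sizeOf_lt_of_mem (by exact ts.get_mem i)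
  omega

open Matrix in
/-- the solution of −y′ = A*y with y(0) = y⁰ -/
noncomputable def adjSol {n : ℕ} (A : Matrix (Fin n) (Fin n) ℝ) (y0 : Fin n → ℝ) (t : ℝ) :
    Fin n → ℝ := (NormedSpace.exp ((-t) • Aᵀ)) *ᵥ y0


open Matrix MeasureTheory Filter

/-- the functional J(y⁰) = ½ ∫₀ᵀ |B*ỹ(t)|² dt + ∫₀ᵀ ⟨ỹ(t), g(t)⟩ dt -/
noncomputable def Jg {n m : ℕ} (A : Matrix (Fin n) (Fin n) ℝ)
    (B : Matrix (Fin n) (Fin m) ℝ) (T : ℝ) (g : ℝ → Fin n → ℝ) (y0 : Fin n → ℝ) : ℝ :=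
  (1 / 2) * (∫ t in (0:ℝ)..T, ∑ j, ((Bᵀ *ᵥ adjSol A y0 t) j) ^ 2)
    + ∫ t in (0:ℝ)..T, ∑ i, adjSol A y0 t i * g t i

section AuxJg

open Set intervalIntegral

attribute [local instance] Matrix.linftyOpNormedAddCommGroup Matrix.linftyOpNormedRing
  Matrix.linftyOpNormedAlgebra

variable {n m : ℕ} (A : Matrix (Fin n) (Fin n) ℝ) (B : Matrix (Fin n) (Fin m) ℝ) (T : ℝ)

lemma continuous_adjSol_apply (v : Fin n → ℝ) (i : Fin n) :
    Continuous fun t => adjSol A v t i := by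
  have h1 : Continuous fun t : ℝ => NormedSpace.exp ((-t) • Aᵀ) :=
    NormedSpace.exp_continuous.comp ((continuous_neg.comp continuous_id).smul continuous_const)
  unfold adjSol
  simp only [Matrix.mulVec, dotProduct]
  exact continuous_finset_sum _ fun j _ => (h1.matrix_elem i j).mul continuous_const

lemma continuous_BT_adjSol (v : Fin n → ℝ) (j : Fin m) :
    Continuous fun t => (Bᵀ *ᵥ adjSol A v t) j := by
  simp only [Matrix.mulVec, dotProduct]
  exact continuous_finset_sum _ fun i _ => continuous_const.mul (continuous_adjSol_apply A v i)

noncomputable def qf (a b : Fin n → ℝ) : ℝ :=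
  ∫ t in (0:ℝ)..T, ∑ j, (Bᵀ *ᵥ adjSol A a t) j * (Bᵀ *ᵥ adjSol A b t) j

noncomputable def lf (g : ℝ → Fin n → ℝ) (a : Fin n → ℝ) : ℝ :=
  ∫ t in (0:ℝ)..T, ∑ i, adjSol A a t i * g t i

lemma qf_cont (a b : Fin n → ℝ) :
    Continuous (fun t => ∑ j, (Bᵀ *ᵥ adjSol A a t) j * (Bᵀ *ᵥ adjSol A b t) j) :=
  continuous_finset_sum _ fun j _ =>
    (continuous_BT_adjSol A B a j).mul (continuous_BT_adjSol A B b j)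

lemma qf_intervalIntegrable (a b : Fin n → ℝ) :
    IntervalIntegrable (fun t => ∑ j, (Bᵀ *ᵥ adjSol A a t) j * (Bᵀ *ᵥ adjSol A b t) j)
      volume 0 T :=
  (qf_cont A B a b).intervalIntegrable 0 T

lemma lf_intervalIntegrable (hT : 0 ≤ T) {g : ℝ → Fin n → ℝ}
    (hg : MemLp g 2 (volume.restrict (Set.Ioc 0 T))) (a : Fin n → ℝ) :
    IntervalIntegrable (fun t => ∑ i, adjSol A a t i * g t i) volume 0 T := by
  rw [intervalIntegrable_iff_integrableOn_Ioc_of_le hT]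
  haveI hfin : IsFiniteMeasure (volume.restrict (Set.Ioc (0:ℝ) T)) := by
    constructor
    rw [Measure.restrict_apply_univ]
    exact measure_Ioc_lt_top
  apply integrable_finset_sum
  intro i _
  have hgi : Integrable (fun t => g t i) (volume.restrict (Set.Ioc (0:ℝ) T)) := by
    have := ((ContinuousLinearMap.proj i : (Fin n → ℝ) →L[ℝ] ℝ).comp_memLp' hg)
    exact this.integrable one_le_two
  have hc := continuous_adjSol_apply A a i
  obtain ⟨C, hC⟩ := (isCompact_Icc (a := (0:ℝ)) (b := T)).exists_bound_of_continuousOn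
    hc.continuousOn
  exact hgi.bdd_mul hc.aestronglyMeasurable ((ae_restrict_iff' measurableSet_Ioc).2
    (Filter.Eventually.of_forall fun t ht => hC t (Set.Ioc_subset_Icc_self ht)))

lemma Jg_eq (g : ℝ → Fin n → ℝ) (a : Fin n → ℝ) :
    Jg A B T g a = 1/2 * qf A B T a a + lf A T g a := by
  unfold Jg qf lf
  congr 2
  exact intervalIntegral.integral_congr fun t _ =>
    Finset.sum_congr rfl fun j _ => pow_two _

lemma qf_comm (a b : Fin n → ℝ) : qf A B T a b = qf A B T b a := by
  unfold qf
  exact intervalIntegral.integral_congr fun t _ =>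
    Finset.sum_congr rfl fun j _ => mul_comm _ _

lemma adjSol_single (t : ℝ) (i k : Fin n) :
    adjSol A (Pi.single k 1) t i = NormedSpace.exp ((-t) • Aᵀ) i k := by
  simp [adjSol, Matrix.mulVec, dotProduct, Pi.single_apply, mul_ite]

lemma adjSol_single_sum (a : Fin n → ℝ) (t : ℝ) (i : Fin n) :
    adjSol A a t i = ∑ k, a k * adjSol A (Pi.single k 1) t i := by
  simp only [adjSol_single]
  simp only [adjSol, Matrix.mulVec, dotProduct]
  exact Finset.sum_congr rfl fun k _ => mul_comm _ _

lemma BT_single_sum (a : Fin n → ℝ) (t : ℝ) (j : Fin m) :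
    (Bᵀ *ᵥ adjSol A a t) j = ∑ k, a k * (Bᵀ *ᵥ adjSol A (Pi.single k 1) t) j := by
  show ∑ i, Bᵀ j i * adjSol A a t i = ∑ k, a k * ∑ i, Bᵀ j i * adjSol A (Pi.single k 1) t i
  calc ∑ i, Bᵀ j i * adjSol A a t i
      = ∑ i, ∑ k, a k * (Bᵀ j i * adjSol A (Pi.single k 1) t i) := by
        refine Finset.sum_congr rfl fun i _ => ?_
        rw [adjSol_single_sum A a t i, Finset.mul_sum]
        exact Finset.sum_congr rfl fun k _ => by ring
    _ = ∑ k, ∑ i, a k * (Bᵀ j i * adjSol A (Pi.single k 1) t i) := Finset.sum_comm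
    _ = ∑ k, a k * ∑ i, Bᵀ j i * adjSol A (Pi.single k 1) t i := by
        exact Finset.sum_congr rfl fun k _ => (Finset.mul_sum _ _ _).symm


lemma integral_sum_mul {ι : Type*} [Fintype ι] (c : ι → ℝ) (F : ι → ℝ → ℝ)
    (hF : ∀ i, IntervalIntegrable (F i) volume 0 T) :
    (∫ t in (0:ℝ)..T, ∑ i, c i * F i t) = ∑ i, c i * ∫ t in (0:ℝ)..T, F i t := by
  rw [intervalIntegral.integral_finset_sum (fun i _ => (hF i).const_mul _)]
  exact Finset.sum_congr rfl fun i _ => intervalIntegral.integral_const_mul _ _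

set_option maxHeartbeats 1000000 in
lemma integral_double_sum_mul {ι κ : Type*} [Fintype ι] [Fintype κ] (c : ι → κ → ℝ)
    (F : ι → κ → ℝ → ℝ) (hF : ∀ i j, IntervalIntegrable (F i j) volume 0 T) :
    (∫ t in (0:ℝ)..T, ∑ i, ∑ j, c i j * F i j t)
      = ∑ i, ∑ j, c i j * ∫ t in (0:ℝ)..T, F i j t := by
  have e1 : (∫ t in (0:ℝ)..T, ∑ i, ∑ j, c i j * F i j t)
      = ∫ t in (0:ℝ)..T, ∑ p : ι × κ, c p.1 p.2 * F p.1 p.2 t :=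
    intervalIntegral.integral_congr fun t _ => by
      rw [← Finset.univ_product_univ, Finset.sum_product]
  rw [e1]
  have h2 := integral_sum_mul T (fun p : ι × κ => c p.1 p.2) (fun p => F p.1 p.2)
    (fun p => hF p.1 p.2)
  rw [h2]
  rw [← Finset.univ_product_univ, Finset.sum_product]

set_option maxHeartbeats 1000000 in
lemma qf_eq_sum (a b : Fin n → ℝ) :
    qf A B T a b = ∑ k, ∑ k', a k * b k' * qf A B T (Pi.single k 1) (Pi.single k' 1) := by
  have hpt : ∀ t, (∑ j, (Bᵀ *ᵥ adjSol A a t) j * (Bᵀ *ᵥ adjSol A b t) j)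
      = ∑ k, ∑ k', a k * b k' *
        ∑ j, (Bᵀ *ᵥ adjSol A (Pi.single k 1) t) j * (Bᵀ *ᵥ adjSol A (Pi.single k' 1) t) j := by
    intro t
    calc ∑ j, (Bᵀ *ᵥ adjSol A a t) j * (Bᵀ *ᵥ adjSol A b t) j
        = ∑ j, ∑ k, ∑ k', a k * b k' *
            ((Bᵀ *ᵥ adjSol A (Pi.single k 1) t) j * (Bᵀ *ᵥ adjSol A (Pi.single k' 1) t) j) := by
          refine Finset.sum_congr rfl fun j _ => ?_
          rw [BT_single_sum A B a t j, BT_single_sum A B b t j, Finset.sum_mul]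
          refine Finset.sum_congr rfl fun k _ => ?_
          rw [Finset.mul_sum]
          refine Finset.sum_congr rfl fun k' _ => by ring
      _ = ∑ k, ∑ j, ∑ k', a k * b k' *
            ((Bᵀ *ᵥ adjSol A (Pi.single k 1) t) j * (Bᵀ *ᵥ adjSol A (Pi.single k' 1) t) j) :=
          Finset.sum_comm
      _ = ∑ k, ∑ k', ∑ j, a k * b k' *
            ((Bᵀ *ᵥ adjSol A (Pi.single k 1) t) j * (Bᵀ *ᵥ adjSol A (Pi.single k' 1) t) j) :=
          Finset.sum_congr rfl fun k _ => Finset.sum_comm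
      _ = ∑ k, ∑ k', a k * b k' *
            ∑ j, (Bᵀ *ᵥ adjSol A (Pi.single k 1) t) j * (Bᵀ *ᵥ adjSol A (Pi.single k' 1) t) j :=
          Finset.sum_congr rfl fun k _ => Finset.sum_congr rfl fun k' _ =>
            (Finset.mul_sum _ _ _).symm
  unfold qf
  rw [intervalIntegral.integral_congr (g := fun t => ∑ k, ∑ k', a k * b k' *
      ∑ j, (Bᵀ *ᵥ adjSol A (Pi.single k 1) t) j * (Bᵀ *ᵥ adjSol A (Pi.single k' 1) t) j)
      fun t _ => hpt t]
  exact integral_double_sum_mul T _ _ fun k k' => qf_intervalIntegrable A B T _ _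

set_option maxHeartbeats 1000000 in
lemma lf_eq_sum (hT : 0 ≤ T) {g : ℝ → Fin n → ℝ}
    (hg : MemLp g 2 (volume.restrict (Set.Ioc 0 T))) (a : Fin n → ℝ) :
    lf A T g a = ∑ k, a k * lf A T g (Pi.single k 1) := by
  have hpt : ∀ t, (∑ i, adjSol A a t i * g t i)
      = ∑ k, a k * ∑ i, adjSol A (Pi.single k 1) t i * g t i := by
    intro t
    calc ∑ i, adjSol A a t i * g t i
        = ∑ i, ∑ k, a k * (adjSol A (Pi.single k 1) t i * g t i) := by
          refine Finset.sum_congr rfl fun i _ => ?_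
          rw [adjSol_single_sum A a t i, Finset.sum_mul]
          exact Finset.sum_congr rfl fun k _ => by ring
      _ = ∑ k, ∑ i, a k * (adjSol A (Pi.single k 1) t i * g t i) := Finset.sum_comm
      _ = ∑ k, a k * ∑ i, adjSol A (Pi.single k 1) t i * g t i :=
          Finset.sum_congr rfl fun k _ => (Finset.mul_sum _ _ _).symm
  unfold lf
  rw [intervalIntegral.integral_congr (g := fun t => ∑ k, a k *
      ∑ i, adjSol A (Pi.single k 1) t i * g t i) fun t _ => hpt t]
  exact integral_sum_mul T _ _ fun k => lf_intervalIntegrable A T hT hg _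

lemma qf_sq (a : Fin n → ℝ) :
    (∫ t in (0:ℝ)..T, ∑ j, ((Bᵀ *ᵥ adjSol A a t) j) ^ 2) = qf A B T a a :=
  intervalIntegral.integral_congr fun t _ => Finset.sum_congr rfl fun j _ => pow_two _

lemma qf_nonneg (hT : 0 ≤ T) (v : Fin n → ℝ) : 0 ≤ qf A B T v v :=
  intervalIntegral.integral_nonneg hT fun t _ => Finset.sum_nonneg fun j _ => mul_self_nonneg _

lemma lf_add_smul (hT : 0 ≤ T) {g : ℝ → Fin n → ℝ}
    (hg : MemLp g 2 (volume.restrict (Set.Ioc 0 T))) (a v : Fin n → ℝ) (ε : ℝ) :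
    lf A T g (a + ε • v) = lf A T g a + ε * lf A T g v := by
  unfold lf
  have hpt : ∀ t, (∑ i, adjSol A (a + ε • v) t i * g t i)
      = (∑ i, adjSol A a t i * g t i) + ε * ∑ i, adjSol A v t i * g t i := by
    intro t
    have h : adjSol A (a + ε • v) t = adjSol A a t + ε • adjSol A v t := by
      simp [adjSol, Matrix.mulVec_add, Matrix.mulVec_smul]
    rw [h, Finset.mul_sum, ← Finset.sum_add_distrib]
    refine Finset.sum_congr rfl fun i _ => ?_
    simp only [Pi.add_apply, Pi.smul_apply, smul_eq_mul]
    ring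
  rw [intervalIntegral.integral_congr (g := fun t => (∑ i, adjSol A a t i * g t i)
      + ε * ∑ i, adjSol A v t i * g t i) fun t _ => hpt t]
  rw [intervalIntegral.integral_add (lf_intervalIntegrable A T hT hg a)
    ((lf_intervalIntegrable A T hT hg v).const_mul ε), intervalIntegral.integral_const_mul]

set_option maxHeartbeats 1000000 in
lemma qf_expand (a v : Fin n → ℝ) (ε : ℝ) :
    qf A B T (a + ε • v) (a + ε • v)
      = qf A B T a a + ε * qf A B T v a + ε * qf A B T a v + ε ^ 2 * qf A B T v v := by
  unfold qf
  have hpt : ∀ t, (∑ j, (Bᵀ *ᵥ adjSol A (a + ε • v) t) j * (Bᵀ *ᵥ adjSol A (a + ε • v) t) j)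
      = (∑ j, (Bᵀ *ᵥ adjSol A a t) j * (Bᵀ *ᵥ adjSol A a t) j)
        + ε * (∑ j, (Bᵀ *ᵥ adjSol A v t) j * (Bᵀ *ᵥ adjSol A a t) j)
        + ε * (∑ j, (Bᵀ *ᵥ adjSol A a t) j * (Bᵀ *ᵥ adjSol A v t) j)
        + ε ^ 2 * (∑ j, (Bᵀ *ᵥ adjSol A v t) j * (Bᵀ *ᵥ adjSol A v t) j) := by
    intro t
    have h : Bᵀ *ᵥ adjSol A (a + ε • v) t
        = Bᵀ *ᵥ adjSol A a t + ε • (Bᵀ *ᵥ adjSol A v t) := by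
      simp [adjSol, Matrix.mulVec_add, Matrix.mulVec_smul]
    rw [h]
    simp only [Finset.mul_sum, ← Finset.sum_add_distrib]
    refine Finset.sum_congr rfl fun j _ => ?_
    simp only [Pi.add_apply, Pi.smul_apply, smul_eq_mul]
    ring
  rw [intervalIntegral.integral_congr
      (g := fun t => (∑ j, (Bᵀ *ᵥ adjSol A a t) j * (Bᵀ *ᵥ adjSol A a t) j)
        + ε * (∑ j, (Bᵀ *ᵥ adjSol A v t) j * (Bᵀ *ᵥ adjSol A a t) j)
        + ε * (∑ j, (Bᵀ *ᵥ adjSol A a t) j * (Bᵀ *ᵥ adjSol A v t) j)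
        + ε ^ 2 * (∑ j, (Bᵀ *ᵥ adjSol A v t) j * (Bᵀ *ᵥ adjSol A v t) j))
      fun t _ => hpt t]
  rw [intervalIntegral.integral_add
      (((qf_intervalIntegrable A B T a a).add
        ((qf_intervalIntegrable A B T v a).const_mul ε)).add
        ((qf_intervalIntegrable A B T a v).const_mul ε))
      ((qf_intervalIntegrable A B T v v).const_mul (ε ^ 2)),
    intervalIntegral.integral_add
      ((qf_intervalIntegrable A B T a a).add
        ((qf_intervalIntegrable A B T v a).const_mul ε))
      ((qf_intervalIntegrable A B T a v).const_mul ε),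
    intervalIntegral.integral_add (qf_intervalIntegrable A B T a a)
      ((qf_intervalIntegrable A B T v a).const_mul ε),
    intervalIntegral.integral_const_mul, intervalIntegral.integral_const_mul,
    intervalIntegral.integral_const_mul]

lemma Jg_expand (hT : 0 ≤ T) {g : ℝ → Fin n → ℝ}
    (hg : MemLp g 2 (volume.restrict (Set.Ioc 0 T))) (a v : Fin n → ℝ) (ε : ℝ) :
    Jg A B T g (a + ε • v)
      = Jg A B T g a + ε * (qf A B T v a + lf A T g v)
        + ε ^ 2 * (1 / 2 * qf A B T v v) := by
  rw [Jg_eq, Jg_eq, qf_expand, lf_add_smul A T hT hg, qf_comm A B T a v]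
  ring

lemma EL_integrand (v a : Fin n → ℝ) (t : ℝ) :
    ∑ i, adjSol A v t i * ((B *ᵥ (Bᵀ *ᵥ adjSol A a t)) i)
      = ∑ j, (Bᵀ *ᵥ adjSol A v t) j * (Bᵀ *ᵥ adjSol A a t) j := by
  set x := adjSol A v t with hx
  set z := Bᵀ *ᵥ adjSol A a t with hz
  show ∑ i, x i * (B *ᵥ z) i = ∑ j, (Bᵀ *ᵥ x) j * z j
  simp only [Matrix.mulVec, dotProduct, Matrix.transpose_apply, Finset.mul_sum,
    Finset.sum_mul]
  rw [Finset.sum_comm]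
  exact Finset.sum_congr rfl fun j _ => Finset.sum_congr rfl fun i _ => by ring

end AuxJg


set_option maxHeartbeats 1000000

/-- under observability, J is continuous and coercive hence has a
minimizer, and at any minimizer the Euler–Lagrange identity
∫₀ᵀ ⟨y, B B* ỹ⟩ + ∫₀ᵀ ⟨y, g⟩ = 0 holds for every solution y of −y′ = A*y. -/
theorem Jg_has_minimizer_and_EL (n m : ℕ) (A : Matrix (Fin n) (Fin n) ℝ)
    (B : Matrix (Fin n) (Fin m) ℝ) (T cT : ℝ) (hT : 0 < T) (hcT : 0 < cT)
    (g : ℝ → Fin n → ℝ)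
    (hg : MemLp g 2 (volume.restrict (Set.Ioc 0 T)))
    (hobs : ∀ y0 : Fin n → ℝ,
      cT * ∑ i, y0 i ^ 2 ≤ ∫ t in (0:ℝ)..T, ∑ j, ((Bᵀ *ᵥ adjSol A y0 t) j) ^ 2) :
    Continuous (Jg A B T g) ∧
      Tendsto (Jg A B T g) (cocompact (Fin n → ℝ)) atTop ∧
      (∃ y0m : Fin n → ℝ, ∀ y0, Jg A B T g y0m ≤ Jg A B T g y0) ∧
      ∀ y0m : Fin n → ℝ, (∀ y0, Jg A B T g y0m ≤ Jg A B T g y0) →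
        ∀ y0 : Fin n → ℝ,
          (∫ t in (0:ℝ)..T, ∑ i, adjSol A y0 t i * ((B *ᵥ (Bᵀ *ᵥ adjSol A y0m t)) i))
            + (∫ t in (0:ℝ)..T, ∑ i, adjSol A y0 t i * g t i) = 0 := by
  have hrep : ∀ y0, Jg A B T g y0
      = 1 / 2 * (∑ k, ∑ k', y0 k * y0 k' * qf A B T (Pi.single k 1) (Pi.single k' 1))
        + ∑ k, y0 k * lf A T g (Pi.single k 1) := by
    intro y0
    rw [Jg_eq, qf_eq_sum, lf_eq_sum A T hT.le hg]
  -- continuity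
  have hcont : Continuous (Jg A B T g) := by
    rw [show Jg A B T g = fun y0 =>
        1 / 2 * (∑ k, ∑ k', y0 k * y0 k' * qf A B T (Pi.single k 1) (Pi.single k' 1))
          + ∑ k, y0 k * lf A T g (Pi.single k 1) from funext hrep]
    refine Continuous.add ?_ ?_
    · exact continuous_const.mul (continuous_finset_sum _ fun k _ =>
        continuous_finset_sum _ fun k' _ =>
          ((continuous_apply k).mul (continuous_apply k')).mul continuous_const)
    · exact continuous_finset_sum _ fun k _ => (continuous_apply k).mul continuous_const
  have hcoer : Tendsto (Jg A B T g) (cocompact (Fin n → ℝ)) atTop := by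
    set C := ∑ k, |lf A T g (Pi.single k 1)| with hCdef
    have hC0 : 0 ≤ C := Finset.sum_nonneg fun k _ => abs_nonneg _
    have hbound : ∀ y0 : Fin n → ℝ, cT / 2 * ‖y0‖ ^ 2 - C * ‖y0‖ ≤ Jg A B T g y0 := by
      intro y0
      have h1 : ‖y0‖ ^ 2 ≤ ∑ i, y0 i ^ 2 := by
        have hS : 0 ≤ ∑ i, y0 i ^ 2 := Finset.sum_nonneg fun i _ => sq_nonneg _
        have h2 : ‖y0‖ ≤ Real.sqrt (∑ i, y0 i ^ 2) := by
          refine (pi_norm_le_iff_of_nonneg (Real.sqrt_nonneg _)).2 fun i => ?_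
          rw [Real.norm_eq_abs, ← Real.sqrt_sq_eq_abs]
          exact Real.sqrt_le_sqrt
            (Finset.single_le_sum (fun j _ => sq_nonneg (y0 j)) (Finset.mem_univ i))
        calc ‖y0‖ ^ 2 ≤ Real.sqrt (∑ i, y0 i ^ 2) ^ 2 :=
              pow_le_pow_left₀ (norm_nonneg _) h2 2
          _ = ∑ i, y0 i ^ 2 := Real.sq_sqrt hS
      have hq : cT * ‖y0‖ ^ 2 ≤ qf A B T y0 y0 := by
        calc cT * ‖y0‖ ^ 2 ≤ cT * ∑ i, y0 i ^ 2 := by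
              exact mul_le_mul_of_nonneg_left h1 hcT.le
          _ ≤ ∫ t in (0:ℝ)..T, ∑ j, ((Bᵀ *ᵥ adjSol A y0 t) j) ^ 2 := hobs y0
          _ = qf A B T y0 y0 := qf_sq A B T y0
      have hl : -(C * ‖y0‖) ≤ lf A T g y0 := by
        rw [lf_eq_sum A T hT.le hg]
        have habs : |∑ k, y0 k * lf A T g (Pi.single k 1)| ≤ C * ‖y0‖ := by
          calc |∑ k, y0 k * lf A T g (Pi.single k 1)|
              ≤ ∑ k, |y0 k * lf A T g (Pi.single k 1)| := Finset.abs_sum_le_sum_abs _ _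
            _ ≤ ∑ k, ‖y0‖ * |lf A T g (Pi.single k 1)| := by
                refine Finset.sum_le_sum fun k _ => ?_
                rw [abs_mul]
                exact mul_le_mul_of_nonneg_right
                  ((Real.norm_eq_abs (y0 k)) ▸ norm_le_pi_norm y0 k) (abs_nonneg _)
            _ = C * ‖y0‖ := by rw [← Finset.mul_sum]; ring
        linarith [neg_abs_le (∑ k, y0 k * lf A T g (Pi.single k 1)), habs]
      have := Jg_eq A B T g y0
      nlinarith [hq, hl]
    have hφ : Tendsto (fun x : ℝ => cT / 2 * x ^ 2 - C * x) atTop atTop := by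
      have h2 : Tendsto (fun x : ℝ => cT / 2 * x + -C) atTop atTop :=
        tendsto_atTop_add_const_right _ (-C) (tendsto_id.const_mul_atTop (by positivity))
      have h3 : Tendsto (fun x : ℝ => x * (cT / 2 * x + -C)) atTop atTop :=
        tendsto_id.atTop_mul_atTop₀ h2
      refine h3.congr fun x => by ring
    exact tendsto_atTop_mono hbound (hφ.comp tendsto_norm_cocompact_atTop)
  refine ⟨hcont, hcoer, hcont.exists_forall_le hcoer, ?_⟩
  -- EL
  intro y0m hmin v
  set D := qf A B T v y0m + lf A T g v with hD
  set R := 1 / 2 * qf A B T v v with hR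
  have hRnn : 0 ≤ R := by
    have := qf_nonneg A B T hT.le v
    rw [hR]; linarith
  have H : ∀ ε : ℝ, 0 ≤ ε * D + ε ^ 2 * R := by
    intro ε
    have h := hmin (y0m + ε • v)
    rw [Jg_expand A B T hT.le hg y0m v ε, ← hD, ← hR] at h
    linarith
  have hD0 : D = 0 := by
    have hR1 : (0:ℝ) < R + 1 := by linarith
    have h2 := H (-(D / (R + 1)))
    have e : -(D / (R + 1)) * D + (-(D / (R + 1))) ^ 2 * R
        = -(D ^ 2) / (R + 1) ^ 2 := by
      field_simp
      ring
    rw [e] at h2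
    have hp : (0:ℝ) < (R + 1) ^ 2 := by positivity
    have h3 : 0 ≤ -(D ^ 2) := by
      have := mul_nonneg h2 hp.le
      calc (0:ℝ) ≤ -(D ^ 2) / (R + 1) ^ 2 * (R + 1) ^ 2 := this
        _ = -(D ^ 2) := by field_simp
    nlinarith [sq_nonneg D]
  have h4 : (∫ t in (0:ℝ)..T, ∑ i, adjSol A v t i * ((B *ᵥ (Bᵀ *ᵥ adjSol A y0m t)) i))
      = qf A B T v y0m :=
    intervalIntegral.integral_congr fun t _ => EL_integrand A B v y0m t
  rw [h4]
  exact hD0
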